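/- Let b_1, b_2 be nontrivial planar loops in PL_0(V) with spans U_1, U_2 respectively. If the concatenation b_1 · b_2 is again a planar loop, then U_1 = U_2. -/

import Mathlib

/-!
Minimal words are normal forms in `PL₀(V)`: letting each letter act on minimal words by prepending
it and merging it with parallel neighbours respects the defining relations, so the minimal word of
`b₁ · b₂` is obtained by reducing `b₁` letter by letter onto `b₂`. Write `b₁ = a x` and `b₂ = y r`.
Reduction only happens at the junction: `x` and `y` are kept, merged or cancelled, and after a
cancellation it stops unless the last letter `w` of `a` and the first letter `z` of `r` are
parallel. In that case `U₂ = span {y, z} ⊆ span {x, w} = U₁`. Otherwise the minimal word of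
`b₁ · b₂` contains `a` and `r`; a nontrivial loop has at least three letters, so `a` spans `U₁` and
`r` spans `U₂`, and the product can only be planar if `U₁ = U₂`.
-/

open FreeMonoid

variable (V : Type*) [AddCommGroup V] [Module ℝ V]

/-- The defining relations of `PL₀(V)`. -/
inductive PLRel : FreeMonoid V → FreeMonoid V → Prop
  | pair (v w : V) (h : ¬ LinearIndependent ℝ ![v, w]) :
      PLRel (of v * of w) (of (v + w))
  | zero : PLRel (of (0 : V)) 1

/-- The group (as a quotient monoid) `PL₀(V)` of piecewise linear paths. -/
abbrev PL0 := (conGen (PLRel V)).Quotient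

variable {V}

/-- The quotient map `FMon(V) → PL₀(V)`. -/
abbrev PLmk : FreeMonoid V →* PL0 V := (conGen (PLRel V)).mk'

/-- A minimal word: all letters nonzero, consecutive letters linearly independent. -/
def IsMinWord (l : List V) : Prop :=
  (∀ v ∈ l, v ≠ 0) ∧ l.Chain' (fun v w => LinearIndependent ℝ ![v, w])

open Module Submodule

section Pairs

variable {v w x : V}

lemma not_linearIndependent_of_mem_span_singleton (hv : v ∈ ℝ ∙ x) (hw : w ∈ ℝ ∙ x) :
    ¬ LinearIndependent ℝ ![v, w] := by
  obtain ⟨a, rfl⟩ := mem_span_singleton.mp hv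
  obtain ⟨b, rfl⟩ := mem_span_singleton.mp hw
  intro h
  obtain ⟨hb, ha⟩ :=
    LinearIndependent.pair_iff.mp h b (-a) (by rw [smul_comm, neg_smul, add_neg_cancel])
  exact h.ne_zero 0 (by simp [neg_eq_zero.mp ha])

lemma mem_span_singleton_of_not_linearIndependent (hv : v ≠ 0)
    (h : ¬ LinearIndependent ℝ ![v, w]) : w ∈ ℝ ∙ v := by
  rw [LinearIndependent.pair_iff' hv] at h
  push Not at h
  exact mem_span_singleton.mpr h

lemma LinearIndependent.pair_of_mem_span_singleton_right (h : LinearIndependent ℝ ![v, w])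
    (hx : x ∈ ℝ ∙ w) (hx0 : x ≠ 0) : LinearIndependent ℝ ![v, x] := by
  obtain ⟨c, rfl⟩ := mem_span_singleton.mp hx
  have hc : IsUnit c := isUnit_iff_ne_zero.mpr (left_ne_zero_of_smul hx0)
  simpa using (LinearIndependent.pair_smul_smul_iff isUnit_one hc).mpr h

lemma LinearIndependent.pair_of_mem_span_singleton_left (h : LinearIndependent ℝ ![v, w])
    (hx : x ∈ ℝ ∙ v) (hx0 : x ≠ 0) : LinearIndependent ℝ ![x, w] :=
  LinearIndependent.pair_symm_iff.mp
    ((LinearIndependent.pair_symm_iff.mp h).pair_of_mem_span_singleton_right hx hx0)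

end Pairs

section MinWord

lemma isMinWord_iff {l : List V} :
    IsMinWord l ↔ (∀ v ∈ l, v ≠ 0) ∧ l.IsChain (fun v w => LinearIndependent ℝ ![v, w]) :=
  Iff.rfl

lemma isMinWord_nil : IsMinWord ([] : List V) := ⟨by simp, List.isChain_nil⟩

lemma isMinWord_cons_iff {v : V} {l : List V} :
    IsMinWord (v :: l) ↔
      v ≠ 0 ∧ (∀ w ∈ l.head?, LinearIndependent ℝ ![v, w]) ∧ IsMinWord l := by
  simp only [isMinWord_iff, List.mem_cons, forall_eq_or_imp, List.isChain_cons]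
  tauto

lemma isMinWord_append {l₁ l₂ : List V} :
    IsMinWord (l₁ ++ l₂) ↔ IsMinWord l₁ ∧ IsMinWord l₂ ∧
      ∀ v ∈ l₁.getLast?, ∀ w ∈ l₂.head?, LinearIndependent ℝ ![v, w] := by
  simp only [isMinWord_iff, List.mem_append, List.isChain_append]
  grind

lemma IsMinWord.tail {v : V} {l : List V} (h : IsMinWord (v :: l)) : IsMinWord l :=
  (isMinWord_cons_iff.mp h).2.2

lemma IsMinWord.take {l : List V} (h : IsMinWord l) (n : ℕ) : IsMinWord (l.take n) :=
  ⟨fun v hv => h.1 v (List.mem_of_mem_take hv), h.2.take n⟩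

lemma IsMinWord.append_cons {a r : List V} {v : V} (ha : IsMinWord (a ++ [v]))
    (hr : IsMinWord (v :: r)) : IsMinWord (a ++ v :: r) := by
  rw [← List.singleton_append, ← List.append_assoc]
  refine isMinWord_append.mpr ⟨ha, hr.tail, ?_⟩
  simpa using (isMinWord_cons_iff.mp hr).2.1

instance (l : List V) : FiniteDimensional ℝ (span ℝ {v | v ∈ l}) :=
  FiniteDimensional.span_of_finite ℝ l.finite_toSet

lemma IsMinWord.span_eq_of_subset {a l : List V} (ha : IsMinWord a) (hlen : 2 ≤ a.length)
    (hl : finrank ℝ (span ℝ {v | v ∈ l}) = 2) (hal : a ⊆ l) :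
    span ℝ {v | v ∈ a} = span ℝ {v | v ∈ l} := by
  obtain ⟨p, q, t, rfl⟩ : ∃ p q t, a = p :: q :: t := by
    rcases a with _ | ⟨p, _ | ⟨q, t⟩⟩
    · simp at hlen
    · simp at hlen
    · exact ⟨p, q, t, rfl⟩
  have hpq : LinearIndependent ℝ ![p, q] := by simpa using (isMinWord_cons_iff.mp ha).2.1
  have hpq_le : span ℝ (Set.range ![p, q]) ≤ span ℝ {v | v ∈ p :: q :: t} :=
    span_mono (by simp [Set.insert_subset_iff])
  have hal' : span ℝ {v | v ∈ p :: q :: t} ≤ span ℝ {v | v ∈ l} := span_mono hal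
  have hpq_eq : span ℝ (Set.range ![p, q]) = span ℝ {v | v ∈ l} :=
    eq_of_le_of_finrank_le (hpq_le.trans hal')
      (by rw [hl, finrank_span_eq_card hpq, Fintype.card_fin])
  exact le_antisymm hal' (hpq_eq ▸ hpq_le)

lemma IsMinWord.three_le_length {l : List V} (hl : IsMinWord l) (hsum : l.sum = 0)
    (h2 : finrank ℝ (span ℝ {v | v ∈ l}) = 2) : 3 ≤ l.length := by
  rcases l with _ | ⟨v, _ | ⟨w, _ | ⟨u, t⟩⟩⟩
  · have hnil : {v : V | v ∈ ([] : List V)} = ∅ :=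
      Set.eq_empty_of_forall_notMem fun _ => List.not_mem_nil
    rw [hnil, span_empty, finrank_bot] at h2
    omega
  · exact absurd (by simpa using hsum) (isMinWord_cons_iff.mp hl).1
  · have hw : w = -v := eq_neg_of_add_eq_zero_right (by simpa using hsum)
    have hvw : LinearIndependent ℝ ![v, w] := by simpa using (isMinWord_cons_iff.mp hl).2.1
    exact absurd hvw (not_linearIndependent_of_mem_span_singleton (mem_span_singleton_self v)
      (hw ▸ neg_mem (mem_span_singleton_self v)))
  · simp

end MinWord

section Reduction

-- For minimal `l`, `reduceCons v l` is the minimal word of `v · l`: `v` merges into the head of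
-- `l` as long as they are parallel (a zero letter is parallel to everything).
open scoped Classical in
noncomputable def reduceCons (v : V) : List V → List V
  | [] => if v = 0 then [] else [v]
  | w :: t => if LinearIndependent ℝ ![v, w] then v :: w :: t else reduceCons (v + w) t

lemma reduceCons_cons_of_linearIndependent {v w : V} (h : LinearIndependent ℝ ![v, w])
    (t : List V) : reduceCons v (w :: t) = v :: w :: t := by
  simp [reduceCons, h]

lemma reduceCons_cons_of_not_linearIndependent {v w : V} (h : ¬ LinearIndependent ℝ ![v, w])
    (t : List V) : reduceCons v (w :: t) = reduceCons (v + w) t := by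
  simp [reduceCons, h]

lemma reduceCons_of_isMinWord_cons {v : V} {l : List V} (h : IsMinWord (v :: l)) :
    reduceCons v l = v :: l := by
  obtain ⟨hv, hvl, -⟩ := isMinWord_cons_iff.mp h
  rcases l with _ | ⟨w, t⟩
  · simp [reduceCons, hv]
  · exact reduceCons_cons_of_linearIndependent (hvl w rfl) t

lemma reduceCons_zero {l : List V} (hl : IsMinWord l) : reduceCons 0 l = l := by
  rcases l with _ | ⟨w, t⟩
  · simp [reduceCons]
  · rw [reduceCons_cons_of_not_linearIndependent (fun h => h.ne_zero 0 rfl), zero_add,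
      reduceCons_of_isMinWord_cons hl]

lemma isMinWord_reduceCons {l : List V} (hl : IsMinWord l) (v : V) :
    IsMinWord (reduceCons v l) := by
  induction l generalizing v with
  | nil =>
    by_cases hv : v = 0
    · simpa [reduceCons, hv] using isMinWord_nil
    · simpa [reduceCons, hv, isMinWord_cons_iff] using isMinWord_nil
  | cons w t ih =>
    by_cases hvw : LinearIndependent ℝ ![v, w]
    · rw [reduceCons_cons_of_linearIndependent hvw]
      exact isMinWord_cons_iff.mpr ⟨fun h => hvw.ne_zero 0 (by simpa using h), by simpa, hl⟩
    · rw [reduceCons_cons_of_not_linearIndependent hvw]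
      exact ih hl.tail _

lemma isMinWord_foldr_reduceCons {r : List V} (hr : IsMinWord r) (l : List V) :
    IsMinWord (l.foldr reduceCons r) := by
  induction l with
  | nil => exact hr
  | cons v l ih => exact isMinWord_reduceCons ih v

-- If `w` is parallel to the head `u` of `l`, both sides first merge into `u`, and the claim
-- for the tail applies.
lemma reduceCons_reduceCons {v w : V} (hvw : ¬ LinearIndependent ℝ ![v, w]) {l : List V}
    (hl : IsMinWord l) : reduceCons v (reduceCons w l) = reduceCons (v + w) l := by
  induction l generalizing w with
  | nil =>
    by_cases hw : w = 0
    · rw [hw, reduceCons_zero hl, add_zero]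
    · simp [reduceCons, hw, hvw]
  | cons u t ih =>
    by_cases hw : w = 0
    · rw [hw, reduceCons_zero hl, add_zero]
    by_cases hwu : LinearIndependent ℝ ![w, u]
    · rw [reduceCons_cons_of_linearIndependent hwu, reduceCons_cons_of_not_linearIndependent hvw]
    have hv : v ∈ ℝ ∙ w := mem_span_singleton_of_not_linearIndependent hw
      (mt LinearIndependent.pair_symm_iff.mpr hvw)
    have hu : u ∈ ℝ ∙ w := mem_span_singleton_of_not_linearIndependent hw hwu
    have hw' : w ∈ ℝ ∙ w := mem_span_singleton_self w
    rw [reduceCons_cons_of_not_linearIndependent hwu,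
      ih (not_linearIndependent_of_mem_span_singleton hv (add_mem hw' hu)) hl.tail,
      reduceCons_cons_of_not_linearIndependent
        (not_linearIndependent_of_mem_span_singleton (add_mem hv hw') hu), add_assoc]

lemma foldr_reduceCons_of_isMinWord_append {a r : List V} (h : IsMinWord (a ++ r)) :
    a.foldr reduceCons r = a ++ r := by
  induction a with
  | nil => rfl
  | cons v a ih =>
    rw [List.foldr_cons, ih h.tail]
    exact reduceCons_of_isMinWord_cons h

end Reduction

section Uniqueness

variable (V) in
noncomputable def reductionCon : Con (FreeMonoid V) where
  r x y := ∀ r, IsMinWord r → x.toList.foldr reduceCons r = y.toList.foldr reduceCons r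
  iseqv := ⟨fun _ _ _ => rfl, fun h r hr => (h r hr).symm,
    fun h₁ h₂ r hr => (h₁ r hr).trans (h₂ r hr)⟩
  mul' {x x' y y'} hx hy r hr := by
    simp only [toList_mul, List.foldr_append]
    rw [hy r hr]
    exact hx _ (isMinWord_foldr_reduceCons hr _)

lemma conGen_PLRel_le_reductionCon : conGen (PLRel V) ≤ reductionCon V := by
  refine Con.conGen_le.mpr fun x y h r hr => ?_
  cases h with
  | pair v w hvw => simpa using reduceCons_reduceCons hvw hr
  | zero => simpa using reduceCons_zero hr

lemma foldr_reduceCons_eq_of_PLmk_eq {x y r : List V} (h : PLmk (ofList x) = PLmk (ofList y))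
    (hr : IsMinWord r) : x.foldr reduceCons r = y.foldr reduceCons r := by
  simpa using conGen_PLRel_le_reductionCon ((Con.eq _).mp h) r hr

lemma eq_foldr_reduceCons_of_PLmk_eq {m a b : List V} (hm : IsMinWord m) (hb : IsMinWord b)
    (h : PLmk (ofList m) = PLmk (ofList (a ++ b))) : m = a.foldr reduceCons b :=
  calc m = m.foldr reduceCons [] := by
        simpa using (foldr_reduceCons_of_isMinWord_append (r := []) (by simpa using hm)).symm
    _ = (a ++ b).foldr reduceCons [] := foldr_reduceCons_eq_of_PLmk_eq h isMinWord_nil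
    _ = a.foldr reduceCons b := by
        rw [List.foldr_append, foldr_reduceCons_of_isMinWord_append (r := []) (by simpa using hb),
          List.append_nil]

end Uniqueness

section Concatenation

lemma exists_foldr_reduceCons_append_singleton_eq {a r : List V} {x y : V}
    (h₁ : IsMinWord (a ++ [x])) (h₂ : IsMinWord (y :: r))
    (hcancel : x + y = 0 → ∀ w ∈ a.getLast?, ∀ z ∈ r.head?, LinearIndependent ℝ ![w, z]) :
    ∃ mid, (a ++ [x]).foldr reduceCons (y :: r) = a ++ mid ++ r := by
  obtain ⟨ha, -, hax⟩ := isMinWord_append.mp h₁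
  obtain ⟨hy0, hyr, hr⟩ := isMinWord_cons_iff.mp h₂
  have hx0 : x ≠ 0 := h₁.1 x (by simp)
  rw [List.foldr_append, List.foldr_cons, List.foldr_nil]
  by_cases hxy : LinearIndependent ℝ ![x, y]
  · refine ⟨[x, y], ?_⟩
    rw [reduceCons_cons_of_linearIndependent hxy, foldr_reduceCons_of_isMinWord_append
      (h₁.append_cons (isMinWord_cons_iff.mpr ⟨hx0, by simpa, h₂⟩))]
    simp
  rw [reduceCons_cons_of_not_linearIndependent hxy]
  by_cases hxy0 : x + y = 0
  · refine ⟨[], ?_⟩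
    rw [hxy0, reduceCons_zero hr, foldr_reduceCons_of_isMinWord_append
      (isMinWord_append.mpr ⟨ha, hr, hcancel hxy0⟩), List.append_nil]
  refine ⟨[x + y], ?_⟩
  have hsum_x : x + y ∈ ℝ ∙ x :=
    add_mem (mem_span_singleton_self x) (mem_span_singleton_of_not_linearIndependent hx0 hxy)
  have hsum_y : x + y ∈ ℝ ∙ y :=
    add_mem (mem_span_singleton_of_not_linearIndependent hy0
      (mt LinearIndependent.pair_symm_iff.mpr hxy)) (mem_span_singleton_self y)
  have hleft : IsMinWord (a ++ [x + y]) := by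
    refine isMinWord_append.mpr
      ⟨ha, isMinWord_cons_iff.mpr ⟨hxy0, by simp, isMinWord_nil⟩, fun w hw z hz => ?_⟩
    obtain rfl : x + y = z := by simpa using hz
    exact (hax w hw x rfl).pair_of_mem_span_singleton_right hsum_x hxy0
  have hright : IsMinWord ((x + y) :: r) := isMinWord_cons_iff.mpr
    ⟨hxy0, fun z hz => (hyr z hz).pair_of_mem_span_singleton_left hsum_y hxy0, hr⟩
  rw [reduceCons_of_isMinWord_cons hright,
    foldr_reduceCons_of_isMinWord_append (hleft.append_cons hright)]
  simp

lemma span_le_of_cancel {a r : List V} {x y w z : V} (h₁ : IsMinWord (a ++ [x]))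
    (h₂ : IsMinWord (y :: r)) (h₂2 : finrank ℝ (span ℝ {v | v ∈ y :: r}) = 2) (hxy : x + y = 0)
    (hw : w ∈ a.getLast?) (hz : z ∈ r.head?) (hwz : ¬ LinearIndependent ℝ ![w, z]) :
    span ℝ {v | v ∈ y :: r} ≤ span ℝ {v | v ∈ a ++ [x]} := by
  obtain ⟨s, rfl⟩ : ∃ s, r = z :: s := by
    rcases r with _ | ⟨z', s⟩
    · simp at hz
    · exact ⟨s, by simpa using hz⟩
  have hwa : w ∈ a ++ [x] := List.mem_append_left _ (List.mem_of_getLast? hw)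
  have hyz : IsMinWord [y, z] := h₂.take 2
  rw [← hyz.span_eq_of_subset le_rfl h₂2 (List.take_subset 2 (y :: z :: s)), span_le]
  intro v hv
  obtain rfl | rfl : v = y ∨ v = z := by simpa using hv
  · rw [eq_neg_of_add_eq_zero_right hxy]
    exact neg_mem (subset_span (by simp))
  · exact (Submodule.span_singleton_le_iff_mem w _).mpr (subset_span hwa)
      (mem_span_singleton_of_not_linearIndependent (h₁.1 w hwa) hwz)

end Concatenation

theorem spans_eq_of_product_of_planar_loops_planar_general
    (lb₁ lb₂ : List V)
    (h₁min : IsMinWord lb₁) (h₁sum : lb₁.sum = 0)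
    (h₁2 : Module.finrank ℝ (Submodule.span ℝ {v | v ∈ lb₁}) = 2)
    (h₂min : IsMinWord lb₂) (h₂sum : lb₂.sum = 0)
    (h₂2 : Module.finrank ℝ (Submodule.span ℝ {v | v ∈ lb₂}) = 2)
    -- `b₁ · b₂` is a planar loop:
    (hprod : ∃ m : List V, IsMinWord m ∧ m.sum = 0 ∧
        Module.finrank ℝ (Submodule.span ℝ {v | v ∈ m}) ≤ 2 ∧
        PLmk (FreeMonoid.ofList m) = PLmk (FreeMonoid.ofList (lb₁ ++ lb₂))) :
    Submodule.span ℝ {v | v ∈ lb₁} = Submodule.span ℝ {v | v ∈ lb₂} := by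
  obtain ⟨m, hm_min, -, hm_rank, hm_eq⟩ := hprod
  have h₁len := h₁min.three_le_length h₁sum h₁2
  have h₂len := h₂min.three_le_length h₂sum h₂2
  obtain ⟨a, x, rfl⟩ : ∃ a x, lb₁ = a ++ [x] :=
    ⟨_, _, (List.dropLast_append_getLast (List.ne_nil_of_length_pos (by omega))).symm⟩
  obtain ⟨y, r, rfl⟩ : ∃ y r, lb₂ = y :: r :=
    List.exists_cons_of_ne_nil (List.ne_nil_of_length_pos (by omega))
  by_cases hcancel : x + y = 0 → ∀ w ∈ a.getLast?, ∀ z ∈ r.head?, LinearIndependent ℝ ![w, z]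
  · obtain ⟨mid, hmid⟩ := exists_foldr_reduceCons_append_singleton_eq h₁min h₂min hcancel
    have hm : m = a ++ mid ++ r := (eq_foldr_reduceCons_of_PLmk_eq hm_min h₂min hm_eq).trans hmid
    have h₁m : span ℝ {v | v ∈ a ++ [x]} ≤ span ℝ {v | v ∈ m} := by
      rw [← (isMinWord_append.mp h₁min).1.span_eq_of_subset (by simp at h₁len; omega) h₁2
        (List.subset_append_left _ _), hm]
      exact span_mono fun v hv => List.mem_append_left _ (List.mem_append_left _ hv)
    have h₂m : span ℝ {v | v ∈ y :: r} ≤ span ℝ {v | v ∈ m} := by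
      rw [← h₂min.tail.span_eq_of_subset (by simp at h₂len; omega) h₂2
        (List.subset_cons_self _ _), hm]
      exact span_mono fun v hv => List.mem_append_right _ hv
    rw [eq_of_le_of_finrank_le h₁m (by omega), eq_of_le_of_finrank_le h₂m (by omega)]
  · push Not at hcancel
    obtain ⟨hxy, w, hw, z, hz, hwz⟩ := hcancel
    exact (eq_of_le_of_finrank_le (span_le_of_cancel h₁min h₂min h₂2 hxy hw hz hwz)
      (by omega)).symm

theorem spans_eq_of_product_of_planar_loops_planar [FiniteDimensional ℝ V]
    (lb₁ lb₂ : List V)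
    (h₁min : IsMinWord lb₁) (h₁sum : lb₁.sum = 0)
    (h₁2 : Module.finrank ℝ (Submodule.span ℝ {v | v ∈ lb₁}) = 2)
    (h₂min : IsMinWord lb₂) (h₂sum : lb₂.sum = 0)
    (h₂2 : Module.finrank ℝ (Submodule.span ℝ {v | v ∈ lb₂}) = 2)
    -- `b₁ · b₂` is a planar loop:
    (hprod : ∃ m : List V, IsMinWord m ∧ m.sum = 0 ∧
        Module.finrank ℝ (Submodule.span ℝ {v | v ∈ m}) ≤ 2 ∧
        PLmk (FreeMonoid.ofList m) = PLmk (FreeMonoid.ofList (lb₁ ++ lb₂))) :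
    Submodule.span ℝ {v | v ∈ lb₁} = Submodule.span ℝ {v | v ∈ lb₂} :=
  spans_eq_of_product_of_planar_loops_planar_general lb₁ lb₂ h₁min h₁sum h₁2 h₂min h₂sum h₂2 hprod
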